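/- Consider the fixed-point problem x = g(x) with g(x) = (I−A)x + b, where A ∈ ℝ^{d×d} is positive definite (its symmetric part (A+Aᵀ)/2 has only positive eigenvalues) and b ∈ ℝ^d, and let {x_k} be generated by the full-memory Type-I/Type-II AM (m_k = k) with nonzero mixing parameters. If r_j ≠ 0 for j = 0, …, k, then det(Z_jᵀR_j) ≠ 0 for j = 1, …, k; moreover the constructions of the modified historical sequences P_k and Q_k are well defined and satisfy Q_k = −AP_k and range(P_k) = range(X_k) = K_k(A, r_0). -/

import Mathlib

open scoped InnerProductSpace
open Finset Matrix

noncomputable section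

/-- Euclidean space `ℝ^d`. -/
abbrev E (d : ℕ) := EuclideanSpace ℝ (Fin d)

/-- Matrix–vector multiplication on Euclidean space. -/
def mvE {d m : ℕ} (A : Matrix (Fin d) (Fin m) ℝ) (u : E m) : E d :=
  Matrix.toEuclideanLin A u

/-!
Since `g` is affine, `Δr_j = -A Δx_j`, so `R_j = -A X_j`, and `cᵀ Z_jᵀ R_j c = ⟪V y, -A y⟫` for
`y = X_j c`, where `V = I` (Type I) or `V = -A` (Type II). Positive definiteness of `A` makes
both `⟪V y, y⟫` and `⟪V y, -A y⟫` nonzero for `y ≠ 0`; in particular `Z_jᵀ R_j` is nonsingular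
as long as the columns of `X_j` are independent.

An AM step then reads `Δx_j = y + β_j r̄_j` with `y ∈ range X_j`, `r̄_j = r_j - A y` orthogonal
to `range Z_j = V (range X_j)`, and `r_{j+1} = (I - β_j A) r̄_j`. If `Δx_j` fell into
`range X_j`, so would `r̄_j`, which would force `r̄_j = 0` and hence `r_{j+1} = 0`. So the
`Δx_j` stay independent; they lie in `K_j(A, r_0)`, of dimension at most `j`, hence
`range X_j = K_j(A, r_0)`. Finally `P_k` and `Q_k = -A P_k` come from an oblique Gram–Schmidt
process for the anisotropic (but not symmetric) bilinear form `(u, v) ↦ ⟪V u, -A v⟫`.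
-/

lemma Fin.snoc_comp_val {α : Type*} (f : ℕ → α) (n : ℕ) :
    Fin.snoc (fun i : Fin n => f i) (f n) = fun i : Fin (n + 1) => f i := by
  funext i
  refine Fin.lastCases ?_ (fun i => ?_) i <;> simp

section PrefixSpan

variable (R : Type*) {M : Type*}

def prefixSpan [Semiring R] [AddCommMonoid M] [Module R M] (f : ℕ → M) (n : ℕ) :
    Submodule R M :=
  Submodule.span R (Set.range fun i : Fin n => f i)

variable {R} {f g : ℕ → M} {n : ℕ}

section Semiring

variable [Semiring R] [AddCommMonoid M] [Module R M]

lemma prefixSpan_zero : prefixSpan R f 0 = ⊥ := by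
  simp [prefixSpan, Set.range_eq_empty]

lemma prefixSpan_succ : prefixSpan R f (n + 1) = prefixSpan R f n ⊔ R ∙ f n := by
  rw [prefixSpan, ← Fin.snoc_comp_val, Fin.range_snoc, Submodule.span_insert, sup_comm,
    prefixSpan]

lemma mem_prefixSpan {i : ℕ} (h : i < n) : f i ∈ prefixSpan R f n :=
  Submodule.subset_span ⟨⟨i, h⟩, rfl⟩

lemma prefixSpan_mono (f : ℕ → M) : Monotone (prefixSpan R f) :=
  monotone_nat_of_le_succ fun n => (prefixSpan_succ (R := R) (f := f) (n := n)).symm ▸ le_sup_left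

lemma exists_eq_sum_of_mem_prefixSpan {v : M} (h : v ∈ prefixSpan R f n) :
    ∃ c : ℕ → R, v = ∑ i ∈ range n, c i • f i := by
  obtain ⟨c, rfl⟩ := (Submodule.mem_span_range_iff_exists_fun R).mp h
  refine ⟨fun i => if h : i < n then c ⟨i, h⟩ else 0, ?_⟩
  rw [Finset.sum_range]
  simp

end Semiring

section Ring

variable [Ring R] [AddCommGroup M] [Module R M]

lemma Submodule.sup_span_singleton_eq_of_sub_mem {W : Submodule R M} {a b : M}
    (h : a - b ∈ W) : W ⊔ R ∙ a = W ⊔ R ∙ b := by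
  have key : ∀ {a b : M}, a - b ∈ W → W ⊔ R ∙ a ≤ W ⊔ R ∙ b := fun {a b} h =>
    sup_le le_sup_left <| (Submodule.span_singleton_le_iff_mem _ _).mpr <| by
      simpa using Submodule.add_mem_sup h (Submodule.mem_span_singleton_self b)
  exact le_antisymm (key h) (key (by rwa [← neg_sub, neg_mem_iff]))

lemma prefixSpan_eq_of_sub_mem (h : ∀ n, f n - g n ∈ prefixSpan R f n) :
    prefixSpan R g = prefixSpan R f := by
  funext n
  induction n with
  | zero => simp only [prefixSpan_zero]
  | succ n ih =>
    rw [prefixSpan_succ, prefixSpan_succ, ih, Submodule.sup_span_singleton_eq_of_sub_mem (h n)]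

lemma sub_mem_prefixSpan_fwdDiff (x : ℕ → M) (n : ℕ) :
    x n - x 0 ∈ prefixSpan R (fwdDiff 1 x) n := by
  rw [← Finset.sum_range_sub]
  exact Submodule.sum_mem _ fun i hi => mem_prefixSpan (Finset.mem_range.mp hi)

lemma finrank_prefixSpan_le [StrongRankCondition R] (f : ℕ → M) (n : ℕ) :
    Module.finrank R (prefixSpan R f n) ≤ n :=
  (finrank_range_le_card _).trans_eq (Fintype.card_fin n)

end Ring

lemma linearIndependent_fin_succ_iff [DivisionRing R] [AddCommGroup M] [Module R M] :
    LinearIndependent R (fun i : Fin (n + 1) => f i) ↔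
      LinearIndependent R (fun i : Fin n => f i) ∧ f n ∉ prefixSpan R f n := by
  rw [← Fin.snoc_comp_val, linearIndependent_finSnoc]
  rfl

end PrefixSpan

section Krylov

variable {R M : Type*} [Semiring R] [AddCommMonoid M] [Module R M]

def krylov (T : M →ₗ[R] M) (v : M) : ℕ → Submodule R M :=
  prefixSpan R fun i => (T ^ i) v

variable {T : M →ₗ[R] M} {v : M} {n : ℕ}

lemma mem_krylov_of_pos (hn : 0 < n) : v ∈ krylov T v n :=
  mem_prefixSpan (f := fun i => (T ^ i) v) hn

lemma apply_mem_krylov_succ {u : M} (hu : u ∈ krylov T v n) : T u ∈ krylov T v (n + 1) := by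
  have : (krylov T v n).map T ≤ krylov T v (n + 1) := by
    rw [krylov, prefixSpan, Submodule.map_span, Submodule.span_le]
    rintro _ ⟨_, ⟨i, rfl⟩, rfl⟩
    rw [← Module.End.mul_apply, ← pow_succ']
    exact mem_prefixSpan (f := fun i => (T ^ i) v) (Nat.succ_lt_succ i.2)
  exact this (Submodule.mem_map_of_mem hu)

end Krylov

section BilinForm

variable {K M : Type*} [Field K] [AddCommGroup M] [Module K M] [FiniteDimensional K M]

theorem LinearMap.BilinForm.exists_sub_mem_orthogonal (B : LinearMap.BilinForm K M)
    {W : Submodule K M} (hW : ∀ w ∈ W, B w w = 0 → w = 0) (s : M) :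
    ∃ w ∈ W, s - w ∈ B.orthogonal W := by
  have hnd : (B.restrict W).flip.Nondegenerate :=
    ⟨fun w hw => Subtype.ext (hW w w.2 (hw w)), fun w hw => Subtype.ext (hW w w.2 (hw w))⟩
  set w := ((B.restrict W).flip.toDual hnd).symm ((B.flip s).domRestrict W)
  refine ⟨w, w.2, B.mem_orthogonal_iff.mpr fun u hu => ?_⟩
  have := LinearMap.BilinForm.apply_toDual_symm_apply (hB := hnd) ((B.flip s).domRestrict W)
    ⟨u, hu⟩
  change B u w = B u s at this
  rw [map_sub, this, sub_self]

theorem LinearMap.BilinForm.exists_gramSchmidt (B : LinearMap.BilinForm K M)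
    (hB : ∀ v, B v v = 0 → v = 0) (s : ℕ → M) :
    ∃ (p : ℕ → M) (ζ : ℕ → ℕ → K), (∀ n, p n = s n - ∑ i ∈ Finset.range n, ζ n i • p i) ∧
      (∀ i n, i < n → B (p i) (p n) = 0) ∧ (∀ n, s n ∉ prefixSpan K s n → p n ≠ 0) ∧
      prefixSpan K p = prefixSpan K s := by
  choose w hwS hworth using fun n =>
    B.exists_sub_mem_orthogonal (W := prefixSpan K s n) (fun v _ => hB v) (s n)
  have hspan : prefixSpan K (fun n => s n - w n) = prefixSpan K s :=
    prefixSpan_eq_of_sub_mem fun n => by simpa using hwS n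
  choose ζ hζ using fun n => exists_eq_sum_of_mem_prefixSpan (hspan ▸ hwS n)
  refine ⟨fun n => s n - w n, ζ, fun n => by rw [← hζ n], fun i n hin => ?_,
    fun n hs hp => ?_, hspan⟩
  · exact B.mem_orthogonal_iff.mp (hworth n) _ (hspan ▸ mem_prefixSpan hin)
  · exact hs (sub_eq_zero.mp hp ▸ hwS n)

end BilinForm

section InnerProduct

variable {H : Type*} [NormedAddCommGroup H] [InnerProductSpace ℝ H]

lemma inner_apply_self_ne_zero {T V : H →ₗ[ℝ] H} (hT : ∀ u ≠ 0, ⟪u, T u⟫_ℝ ≠ 0)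
    (hV : V = LinearMap.id ∨ V = T) {u : H} (hu : u ≠ 0) : ⟪V u, u⟫_ℝ ≠ 0 := by
  rcases hV with rfl | rfl
  · simpa using hu
  · rw [real_inner_comm]
    exact hT u hu

lemma inner_apply_apply_ne_zero {T V : H →ₗ[ℝ] H} (hT : ∀ u ≠ 0, ⟪u, T u⟫_ℝ ≠ 0)
    (hV : V = LinearMap.id ∨ V = T) {u : H} (hu : u ≠ 0) : ⟪V u, T u⟫_ℝ ≠ 0 := by
  rcases hV with rfl | rfl
  · exact hT u hu
  · have hVu : V u ≠ 0 := fun h => hT u hu (by rw [h, inner_zero_right])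
    simpa using hVu

lemma add_smul_notMem_of_inner_eq_zero {V : H →ₗ[ℝ] H} (hV : ∀ u ≠ 0, ⟪V u, u⟫_ℝ ≠ 0)
    {S : Submodule ℝ H} {y ρ : H} {β : ℝ} (hy : y ∈ S) (hρ : ρ ≠ 0)
    (horth : ∀ u ∈ S, ⟪V u, ρ⟫_ℝ = 0) (hβ : β ≠ 0) : y + β • ρ ∉ S := by
  intro h
  have hρS : ρ ∈ S := by
    rw [← inv_smul_smul₀ hβ ρ, ← add_sub_cancel_left y (β • ρ)]
    exact S.smul_mem _ (S.sub_mem h hy)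
  exact hV ρ hρ (horth ρ hρS)

variable [FiniteDimensional ℝ H]

theorem linearIndependent_fwdDiff_and_prefixSpan_eq_krylov (L V : H →ₗ[ℝ] H)
    (hV : ∀ u ≠ 0, ⟪V u, u⟫_ℝ ≠ 0) (b : H) (x r : ℕ → H) (hr : ∀ n, r n = b - L (x n))
    (β : ℕ → ℝ) (hβ : ∀ n, β n ≠ 0) (k : ℕ) (hne : ∀ j ≤ k, r j ≠ 0)
    (hstep : ∀ j < k, LinearIndependent ℝ (fun i : Fin j => fwdDiff 1 x i) →
      ∃ y ∈ prefixSpan ℝ (fwdDiff 1 x) j, fwdDiff 1 x j = y + β j • (r j - L y) ∧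
        ∀ u ∈ prefixSpan ℝ (fwdDiff 1 x) j, ⟪V u, r j - L y⟫_ℝ = 0) :
    ∀ j ≤ k, LinearIndependent ℝ (fun i : Fin j => fwdDiff 1 x i) ∧
      prefixSpan ℝ (fwdDiff 1 x) j = krylov L (r 0) j := by
  intro j
  induction j with
  | zero => exact fun _ => ⟨linearIndependent_empty_type, by simp only [krylov, prefixSpan_zero]⟩
  | succ j ih =>
    intro hj
    obtain ⟨hli, hspan⟩ := ih (by omega)
    obtain ⟨y, hy, hΔ, horth⟩ := hstep j (by omega) hli
    have hnext : r (j + 1) = (r j - L y) - β j • L (r j - L y) := by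
      rw [hr, show x (j + 1) = x j + fwdDiff 1 x j by simp [fwdDiff], hΔ, hr]
      simp only [map_add, map_smul]
      abel
    have hρ : r j - L y ≠ 0 := fun h =>
      hne (j + 1) hj (by rw [hnext, h, map_zero, smul_zero, sub_zero])
    have hli' : LinearIndependent ℝ (fun i : Fin (j + 1) => fwdDiff 1 x i) :=
      linearIndependent_fin_succ_iff.mpr
        ⟨hli, hΔ ▸ add_smul_notMem_of_inner_eq_zero hV hy hρ horth (hβ j)⟩
    have hyK : y ∈ krylov L (r 0) j := hspan ▸ hy
    have hrK : r j ∈ krylov L (r 0) (j + 1) := by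
      have hrj : r j = r 0 - L (x j - x 0) := by simp only [hr, map_sub]; abel
      rw [hrj]
      exact Submodule.sub_mem _ (mem_krylov_of_pos j.succ_pos)
        (apply_mem_krylov_succ (hspan ▸ sub_mem_prefixSpan_fwdDiff x j))
    have hΔK : fwdDiff 1 x j ∈ krylov L (r 0) (j + 1) := by
      rw [hΔ]
      exact Submodule.add_mem _ (prefixSpan_mono _ j.le_succ hyK)
        (Submodule.smul_mem _ _ (Submodule.sub_mem _ hrK (apply_mem_krylov_succ hyK)))
    have hle : prefixSpan ℝ (fwdDiff 1 x) (j + 1) ≤ krylov L (r 0) (j + 1) := by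
      rw [prefixSpan_succ, hspan]
      exact sup_le (prefixSpan_mono _ j.le_succ)
        ((Submodule.span_singleton_le_iff_mem _ _).mpr hΔK)
    refine ⟨hli', Submodule.eq_of_le_of_finrank_le hle ?_⟩
    rw [prefixSpan, finrank_span_eq_card hli', Fintype.card_fin]
    exact finrank_prefixSpan_le _ _

theorem exists_modifiedHistory (T V : H →ₗ[ℝ] H) (hVT : ∀ u ≠ 0, ⟪V u, T u⟫_ℝ ≠ 0)
    (x r : ℕ → H) (hΔr : ∀ n, r (n + 1) - r n = T (x (n + 1) - x n)) (k : ℕ)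
    (hx : ∀ n < k, fwdDiff 1 x n ∉ prefixSpan ℝ (fwdDiff 1 x) n) :
    ∃ (p : ℕ → H) (ζ : ℕ → ℕ → ℝ), p 1 = x 1 - x 0 ∧
      (∀ j, 2 ≤ j →
        p j = (x j - x (j - 1)) - ∑ i ∈ Finset.range (j - 1), ζ j i • p (1 + i) ∧
        T (p j) = (r j - r (j - 1)) - ∑ i ∈ Finset.range (j - 1), ζ j i • T (p (1 + i)) ∧
        ∀ i < j - 1, ⟪V (p (1 + i)), T (p j)⟫_ℝ = 0) ∧
      (∀ j, 1 ≤ j → j ≤ k → ⟪V (p j), T (p j)⟫_ℝ ≠ 0) ∧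
      prefixSpan ℝ (fun n => p (n + 1)) = prefixSpan ℝ (fwdDiff 1 x) := by
  obtain ⟨p, ζ, hp, horth, hne, hspan⟩ := LinearMap.BilinForm.exists_gramSchmidt
    ((innerₗ H).compl₁₂ V T) (fun u hu => by_contra fun h => hVT u h hu) (fwdDiff 1 x)
  -- the paper's `p_j`, `ζ_j` are `p (j - 1)`, `ζ (j - 1)`
  refine ⟨fun j => p (j - 1), fun j => ζ (j - 1), by simp [hp 0, fwdDiff], fun j hj => ?_,
    fun j hj hjk => hVT _ (hne _ (hx _ (by omega))), by simpa using hspan⟩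
  obtain ⟨m, rfl⟩ : ∃ m, j = m + 1 := ⟨j - 1, by omega⟩
  simp only [Nat.add_sub_cancel, add_tsub_cancel_left]
  refine ⟨hp m, ?_, fun i hi => by simpa using horth i m hi⟩
  rw [hΔr, hp m, map_sub, map_sum]
  simp only [map_smul]
  rfl

end InnerProduct

theorem Matrix.det_transpose_mul_ne_zero {R n m : Type*} [CommRing R] [IsDomain R] [Fintype n]
    [Fintype m] [DecidableEq m] (Z W : Matrix n m R) (h : ∀ c ≠ 0, Z *ᵥ c ⬝ᵥ W *ᵥ c ≠ 0) :
    (Zᵀ * W).det ≠ 0 := by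
  intro hdet
  obtain ⟨c, hc, hZW⟩ := Matrix.exists_mulVec_eq_zero_iff.mpr hdet
  apply h c hc
  rw [← Matrix.vecMul_transpose, ← Matrix.dotProduct_mulVec, Matrix.mulVec_mulVec, hZW,
    dotProduct_zero]

theorem Matrix.exists_am_update_mulVec_eq {R n m : Type*} [CommRing R] [Fintype n] [Fintype m]
    [DecidableEq n] [DecidableEq m] (X W Z : Matrix n m R) (β : R) (r : n → R)
    (h : IsUnit (Zᵀ * W).det) :
    ∃ γ, (β • 1 - (X + β • W) * (Zᵀ * W)⁻¹ * Zᵀ) *ᵥ r = X *ᵥ γ + β • (r + W *ᵥ γ) ∧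
      Zᵀ *ᵥ (r + W *ᵥ γ) = 0 := by
  refine ⟨-((Zᵀ * W)⁻¹ *ᵥ (Zᵀ *ᵥ r)), ?_, ?_⟩
  · simp only [Matrix.sub_mulVec, Matrix.smul_mulVec, Matrix.one_mulVec, ← Matrix.mulVec_mulVec,
      Matrix.add_mulVec, Matrix.mulVec_neg]
    module
  · rw [Matrix.mulVec_add, Matrix.mulVec_mulVec, Matrix.mulVec_neg, Matrix.mulVec_mulVec,
      Matrix.mul_nonsing_inv _ h, Matrix.one_mulVec, add_neg_cancel]

section ColumnMatrix

variable {d : ℕ} {ι : Type*}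

def colMatrix (f : ι → E d) : Matrix (Fin d) ι ℝ := Matrix.of fun c i => f i c

lemma colMatrix_mulVec [Fintype ι] (f : ι → E d) (c : ι → ℝ) :
    colMatrix f *ᵥ c = WithLp.ofLp (∑ i, c i • f i) := by
  ext a
  simp [colMatrix, Matrix.mulVec, dotProduct, mul_comm]

lemma transpose_colMatrix_mulVec (f : ι → E d) (w : E d) :
    (colMatrix f)ᵀ *ᵥ WithLp.ofLp w = fun i => ⟪f i, w⟫_ℝ := by
  ext i
  simp [colMatrix, Matrix.mulVec, dotProduct, PiLp.inner_apply, mul_comm]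

lemma colMatrix_neg_mvE [Fintype ι] (A : Matrix (Fin d) (Fin d) ℝ) (f : ι → E d) :
    colMatrix (fun i => -mvE A (f i)) = -(A * colMatrix f) := by
  ext a i
  simp [colMatrix, mvE, Matrix.mul_apply, Matrix.toLpLin_apply, Matrix.mulVec, dotProduct]

lemma dotProduct_ofLp (u v : E d) : WithLp.ofLp u ⬝ᵥ WithLp.ofLp v = ⟪u, v⟫_ℝ := by
  rw [EuclideanSpace.inner_eq_star_dotProduct, star_trivial, dotProduct_comm]

lemma krylov_toEuclideanLin (A : Matrix (Fin d) (Fin d) ℝ) (v : E d) (n : ℕ) :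
    krylov (Matrix.toEuclideanLin A) v n =
      Submodule.span ℝ (Set.range fun i : Fin n => mvE (A ^ (i : ℕ)) v) := by
  simp [krylov, prefixSpan, mvE, Matrix.toLpLin_pow]

end ColumnMatrix

section AndersonMixingMatrix

variable {d m : ℕ} (V T : E d →ₗ[ℝ] E d) (f : Fin m → E d)

theorem det_colMatrix_ne_zero (hVT : ∀ u ≠ 0, ⟪V u, T u⟫_ℝ ≠ 0) (hf : LinearIndependent ℝ f) :
    ((colMatrix fun i => V (f i))ᵀ * colMatrix fun i => T (f i)).det ≠ 0 := by
  refine Matrix.det_transpose_mul_ne_zero _ _ fun c hc => ?_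
  have hy : ∑ i, c i • f i ≠ 0 := fun h => hc (funext (Fintype.linearIndependent_iff.mp hf c h))
  have hsum : ∀ W : E d →ₗ[ℝ] E d, ∑ i, c i • W (f i) = W (∑ i, c i • f i) := fun W => by
    simp only [map_sum, map_smul]
  rw [colMatrix_mulVec, colMatrix_mulVec, dotProduct_ofLp, hsum, hsum]
  exact hVT _ hy

theorem exists_am_update_eq (β : ℝ) (ρ : E d)
    (h : ((colMatrix fun i => V (f i))ᵀ * colMatrix fun i => T (f i)).det ≠ 0) :
    ∃ y ∈ Submodule.span ℝ (Set.range f),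
      mvE (β • 1 - (colMatrix f + β • colMatrix fun i => T (f i)) *
        ((colMatrix fun i => V (f i))ᵀ * colMatrix fun i => T (f i))⁻¹ *
          (colMatrix fun i => V (f i))ᵀ) ρ = y + β • (ρ + T y) ∧
      ∀ u ∈ Submodule.span ℝ (Set.range f), ⟪V u, ρ + T y⟫_ℝ = 0 := by
  obtain ⟨γ, hupd, horth⟩ := Matrix.exists_am_update_mulVec_eq (colMatrix f)
    (colMatrix fun i => T (f i)) (colMatrix fun i => V (f i)) β (WithLp.ofLp ρ) h.isUnit
  set y := ∑ i, γ i • f i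
  have hTy : colMatrix (fun i => T (f i)) *ᵥ γ = WithLp.ofLp (T y) := by
    simp [colMatrix_mulVec, y, map_sum]
  refine ⟨y, Submodule.sum_mem _ fun i _ => Submodule.smul_mem _ _ (Submodule.subset_span ⟨i, rfl⟩),
    ?_, fun u hu => ?_⟩
  · apply WithLp.ofLp_injective
    rw [mvE, Matrix.toLpLin_apply, WithLp.ofLp_toLp, hupd, hTy, colMatrix_mulVec]
    rfl
  · rw [hTy, ← WithLp.ofLp_add, transpose_colMatrix_mulVec] at horth
    refine Submodule.span_induction (fun _ ⟨i, hi⟩ => hi ▸ congrFun horth i) ?_ ?_ ?_ hu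
    · simp
    · intro u w _ _ hu hw
      simp [inner_add_left, hu, hw]
    · intro a u _ hu
      simp [inner_smul_left, hu]

end AndersonMixingMatrix

theorem stmt_2_general {d : ℕ} (A : Matrix (Fin d) (Fin d) ℝ) (b : E d)
    (hpd : ∀ y : E d, y ≠ 0 → 0 < ⟪y, mvE A y⟫_ℝ)
    (typeII : Bool) (β : ℕ → ℝ) (hβ : ∀ j, β j ≠ 0)
    (x : ℕ → E d) (r : ℕ → E d) (hr : ∀ j, r j = b - mvE A (x j))
    (k : ℕ)
    (X R Z : (j : ℕ) → Matrix (Fin d) (Fin j) ℝ)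
    (hX : ∀ j, X j = Matrix.of fun c (i : Fin j) => (x ((i : ℕ) + 1) - x (i : ℕ)) c)
    (hR : ∀ j, R j = Matrix.of fun c (i : Fin j) => (r ((i : ℕ) + 1) - r (i : ℕ)) c)
    (hZ : ∀ j, Z j = if typeII then R j else X j)
    (h0 : x 1 = x 0 + β 0 • r 0)
    (hAM : ∀ j, 1 ≤ j → j < k → x (j + 1) = x j +
      mvE (β j • (1 : Matrix (Fin d) (Fin d) ℝ)
            - (X j + β j • R j) * ((Z j)ᵀ * R j)⁻¹ * (Z j)ᵀ) (r j))
    (hne : ∀ j ≤ k, r j ≠ 0) :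
    -- nonsingularity of `Z_jᵀ R_j` for `j = 1, …, k`
    (∀ j, 1 ≤ j → j ≤ k → ((Z j)ᵀ * R j).det ≠ 0) ∧
    -- the modified historical sequences are well defined and satisfy
    -- `Q_k = -A P_k`, `range(P_k) = range(X_k) = K_k(A, r_0)`
    ∃ (p q : ℕ → E d) (ζ : ℕ → ℕ → ℝ),
      (p 1 = x 1 - x 0 ∧ q 1 = r 1 - r 0) ∧
      (∀ j, 2 ≤ j → j ≤ k →
        p j = (x j - x (j - 1)) - ∑ i ∈ Finset.range (j - 1), ζ j i • p (1 + i) ∧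
        q j = (r j - r (j - 1)) - ∑ i ∈ Finset.range (j - 1), ζ j i • q (1 + i) ∧
        ∀ i < j - 1, ⟪(if typeII then q (1 + i) else p (1 + i)), q j⟫_ℝ = 0) ∧
      (∀ j, 1 ≤ j → j ≤ k → ⟪(if typeII then q j else p j), q j⟫_ℝ ≠ 0) ∧
      (Matrix.of fun c (i : Fin k) => q (1 + (i : ℕ)) c)
        = -(A * Matrix.of fun c (i : Fin k) => p (1 + (i : ℕ)) c) ∧
      Submodule.span ℝ (Set.range fun i : Fin k => p ((i : ℕ) + 1))
        = Submodule.span ℝ (Set.range fun i : Fin k => x ((i : ℕ) + 1) - x (i : ℕ)) ∧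
      Submodule.span ℝ (Set.range fun i : Fin k => x ((i : ℕ) + 1) - x (i : ℕ))
        = Submodule.span ℝ (Set.range fun i : Fin k => mvE (A ^ (i : ℕ)) (r 0)) := by
  set L : E d →ₗ[ℝ] E d := Matrix.toEuclideanLin A
  -- `Z_j` is `V X_j`, so that Type I and Type II differ only in `V`
  set V : E d →ₗ[ℝ] E d := if typeII then -L else LinearMap.id
  have hL : ∀ u ≠ 0, ⟪u, (-L) u⟫_ℝ ≠ 0 := fun u hu => by
    rw [LinearMap.neg_apply, inner_neg_right, neg_ne_zero]
    exact (hpd u hu).ne'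
  have hV : V = LinearMap.id ∨ V = -L := by cases typeII <;> simp [V]
  have hVite : ∀ u, V u = if typeII then (-L) u else u := fun u => by cases typeII <;> rfl
  have hΔr : ∀ n, r (n + 1) - r n = (-L) (x (n + 1) - x n) := fun n => by
    rw [hr, hr, LinearMap.neg_apply, map_sub]
    change b - L (x (n + 1)) - (b - L (x n)) = -(L (x (n + 1)) - L (x n))
    abel
  have hXc : ∀ j, X j = colMatrix fun i : Fin j => fwdDiff 1 x i := fun j => by rw [hX]; rfl
  have hRc : ∀ j, R j = colMatrix fun i : Fin j => (-L) (fwdDiff 1 x i) := fun j => by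
    rw [hR]; simp only [hΔr]; rfl
  have hZc : ∀ j, Z j = colMatrix fun i : Fin j => V (fwdDiff 1 x i) := fun j => by
    rw [hZ, hXc, hRc]; cases typeII <;> rfl
  have hdet : ∀ j, LinearIndependent ℝ (fun i : Fin j => fwdDiff 1 x i) →
      ((Z j)ᵀ * R j).det ≠ 0 := fun j hli => by
    rw [hZc, hRc]
    exact det_colMatrix_ne_zero V (-L) _ (fun u hu => inner_apply_apply_ne_zero hL hV hu) hli
  have hkry := linearIndependent_fwdDiff_and_prefixSpan_eq_krylov L V
    (fun u hu => inner_apply_self_ne_zero hL hV hu) b x r hr β hβ k hne fun j hj hli => by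
      rcases j.eq_zero_or_pos with rfl | hj0
      · exact ⟨0, zero_mem _, by simp [fwdDiff, h0], by simp [prefixSpan_zero]⟩
      obtain ⟨y, hy, hupd, horth⟩ := exists_am_update_eq V (-L) (fun i : Fin j => fwdDiff 1 x i)
        (β j) (r j) (hZc j ▸ hRc j ▸ hdet j hli)
      have hstep := hAM j hj0 hj
      rw [hXc, hRc, hZc, hupd] at hstep
      simp only [LinearMap.neg_apply, ← sub_eq_add_neg] at hstep horth
      exact ⟨y, hy, by rw [fwdDiff, hstep, add_sub_cancel_left], horth⟩
  obtain ⟨p, ζ, hp1, hrec, hdiag, hspan⟩ := exists_modifiedHistory (-L) V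
    (fun u hu => inner_apply_apply_ne_zero hL hV hu) x r hΔr k
    fun n hn => (linearIndependent_fin_succ_iff.mp (hkry (n + 1) hn).1).2
  refine ⟨fun j _ hj => hdet j (hkry j hj).1, p, fun j => (-L) (p j), ζ,
    ⟨hp1, by simp only [hp1]; exact (hΔr 0).symm⟩, fun j hj _ => ?_, fun j hj hjk => ?_,
    colMatrix_neg_mvE A _, congrFun hspan k, krylov_toEuclideanLin A (r 0) k ▸ (hkry k le_rfl).2⟩
  · obtain ⟨hp, hq, horth⟩ := hrec j hj
    exact ⟨hp, hq, fun i hi => hVite (p (1 + i)) ▸ horth i hi⟩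
  · exact hVite (p j) ▸ hdiag j hj hjk

/-- Proposition 4.1, second half, of the paper.  For the linear
fixed-point problem `g(x) = (I-A)x + b` with `A` positive definite (its
symmetric part has only positive eigenvalues, i.e. `yᵀAy > 0` for `y ≠ 0`),
solved by the full-memory Type-I/Type-II AM with nonzero mixing parameters, if
`r_j ≠ 0` for `j = 0, …, k`, then `det(Z_jᵀ R_j) ≠ 0` for `j = 1, …, k`;
moreover the modified historical sequences `P_k`, `Q_k` are well defined
(there exist `p, q, ζ` satisfying the defining recursions with `v_jᵀ q_j ≠ 0`)
and satisfy `Q_k = -A P_k` and `range(P_k) = range(X_k) = K_k(A, r_0)`. -/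
theorem stmt_2 {d : ℕ} (A : Matrix (Fin d) (Fin d) ℝ) (b : E d)
    (hpd : ∀ y : E d, y ≠ 0 → 0 < ⟪y, mvE A y⟫_ℝ)
    (typeII : Bool) (β : ℕ → ℝ) (hβ : ∀ j, β j ≠ 0)
    (x : ℕ → E d) (r : ℕ → E d) (hr : ∀ j, r j = b - mvE A (x j))
    (k : ℕ) (hk : 1 ≤ k)
    (X R Z : (j : ℕ) → Matrix (Fin d) (Fin j) ℝ)
    (hX : ∀ j, X j = Matrix.of fun c (i : Fin j) => (x ((i : ℕ) + 1) - x (i : ℕ)) c)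
    (hR : ∀ j, R j = Matrix.of fun c (i : Fin j) => (r ((i : ℕ) + 1) - r (i : ℕ)) c)
    (hZ : ∀ j, Z j = if typeII then R j else X j)
    (h0 : x 1 = x 0 + β 0 • r 0)
    (hAM : ∀ j, 1 ≤ j → j < k → x (j + 1) = x j +
      mvE (β j • (1 : Matrix (Fin d) (Fin d) ℝ)
            - (X j + β j • R j) * ((Z j)ᵀ * R j)⁻¹ * (Z j)ᵀ) (r j))
    (hne : ∀ j ≤ k, r j ≠ 0) :
    -- nonsingularity of `Z_jᵀ R_j` for `j = 1, …, k`
    (∀ j, 1 ≤ j → j ≤ k → ((Z j)ᵀ * R j).det ≠ 0) ∧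
    -- the modified historical sequences are well defined and satisfy
    -- `Q_k = -A P_k`, `range(P_k) = range(X_k) = K_k(A, r_0)`
    ∃ (p q : ℕ → E d) (ζ : ℕ → ℕ → ℝ),
      (p 1 = x 1 - x 0 ∧ q 1 = r 1 - r 0) ∧
      (∀ j, 2 ≤ j → j ≤ k →
        p j = (x j - x (j - 1)) - ∑ i ∈ Finset.range (j - 1), ζ j i • p (1 + i) ∧
        q j = (r j - r (j - 1)) - ∑ i ∈ Finset.range (j - 1), ζ j i • q (1 + i) ∧
        ∀ i < j - 1, ⟪(if typeII then q (1 + i) else p (1 + i)), q j⟫_ℝ = 0) ∧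
      (∀ j, 1 ≤ j → j ≤ k → ⟪(if typeII then q j else p j), q j⟫_ℝ ≠ 0) ∧
      (Matrix.of fun c (i : Fin k) => q (1 + (i : ℕ)) c)
        = -(A * Matrix.of fun c (i : Fin k) => p (1 + (i : ℕ)) c) ∧
      Submodule.span ℝ (Set.range fun i : Fin k => p ((i : ℕ) + 1))
        = Submodule.span ℝ (Set.range fun i : Fin k => x ((i : ℕ) + 1) - x (i : ℕ)) ∧
      Submodule.span ℝ (Set.range fun i : Fin k => x ((i : ℕ) + 1) - x (i : ℕ))
        = Submodule.span ℝ (Set.range fun i : Fin k => mvE (A ^ (i : ℕ)) (r 0)) :=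
  stmt_2_general A b hpd typeII β hβ x r hr k X R Z hX hR hZ h0 hAM hne

end
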